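/- Let q be a power of a prime p, let n, m be positive integers with n | m, and let σ : x ↦ x^{q^s} with gcd(s,m)=1. Let 𝒞 be a set of σ-linearized polynomials over F_{q^m}, let β ∈ F_{q^m}^*, let α_1,…,α_n be an F_q-basis of βF_{q^n}, let C = {(g(α_1),…,g(α_n)) : g ∈ 𝒞} ⊆ F_{q^m}^n, and let d be its minimum rank distance. Suppose there is a positive integer t such that: (1) n−d+1 ≤ t ≤ n−⌊(d−1)/2⌋−1; (2) t−1 is a power of p; (3) n = t(t−1) + 1; (4) { a x^{σ^j} + b x^{σ^{j+1}} : a, b ∈ F_{q^m} } ⊆ 𝒞 for some integer j with 0 ≤ j < n−t. Then there exists a word w ∈ F_{q^m}^n ∖ C such that |C ∩ B_{n−t}(w)| ≥ (q^n−1)/(q−1). -/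

import Mathlib

/-- Rank weight of a vector `v ∈ K^n` over `F_q`. -/
noncomputable def rkw (Fq : Type) [Field Fq] {K : Type} [Field K] [Algebra Fq K] {n : ℕ}
    (v : Fin n → K) : ℕ :=
  Module.finrank Fq ↥(Submodule.span Fq (Set.range v))

/-- Ball of radius `t` around `w` in the rank metric. -/
def ball (Fq : Type) [Field Fq] {K : Type} [Field K] [Algebra Fq K] {n : ℕ}
    (w : Fin n → K) (t : ℕ) : Set (Fin n → K) :=
  {c : Fin n → K | rkw Fq (w - c) ≤ t}

/-- Minimum rank distance of a code `C ⊆ K^n`. -/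
noncomputable def minDist (Fq : Type) [Field Fq] {K : Type} [Field K] [Algebra Fq K] {n : ℕ}
    (C : Set (Fin n → K)) : ℕ :=
  sInf {r : ℕ | ∃ u ∈ C, ∃ v ∈ C, u ≠ v ∧ rkw Fq (u - v) = r}

/-!
Write `σ x = x^{q^s}`, `F = F_{q^n}` and `T = σ^t + σ + 1`. For `u ∈ βF` nonzero, the polynomial
`a x^{σ^j} + b x^{σ^{j+1}}` with `a = -σ^{t+j}(u)/σ^j(u)`, `b = -σ^{t+j}(u)/σ^{j+1}(u)` differs from
`x^{σ^{t+j}}` by `x ↦ σ^{t+j}(u) σ^j(T(x/u))`, which vanishes on `u · ker T ⊆ βF`. So the word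
`w = (α_i^{σ^{t+j}})` is at rank distance at most `n - dim ker T` from each of these codewords.

Since `t - 1` is a power of the characteristic, `X^t + X + 1` divides `X^n - 1`, say with cofactor
`h`, and `n = dim ker(σ^n - 1) ≤ dim ker T + dim ker h(σ)`. The fixed field of `σ` is `F_q` because
`gcd(s, m) = 1`, so Ore's bound for σ-linearized polynomials gives `dim ker h(σ) ≤ deg h = n - t`;
hence `dim ker T ≥ t`. Two of the codewords coincide only when the ratio of their parameters `u` is
fixed by `σ^t` and by `σ^n`, hence by `σ` (as `gcd(t, n) = 1`), i.e. lies in `F_q^*`: there are at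
least `(q^n - 1)/(q - 1)` of them. Finally `n - t < d`, so a ball of radius `n - t` containing two
codewords cannot be centred at a codeword.
-/

open scoped Polynomial
open Polynomial (X aeval aeval_X aeval_eq_sum_range)
open Module LinearMap Finset

theorem LinearMap.finrank_ker_comp_le {k V W U : Type*} [Field k] [AddCommGroup V] [Module k V]
    [AddCommGroup W] [Module k W] [AddCommGroup U] [Module k U] [FiniteDimensional k V]
    [FiniteDimensional k W] (f : W →ₗ[k] U) (g : V →ₗ[k] W) :
    finrank k (ker (f ∘ₗ g)) ≤ finrank k (ker f) + finrank k (ker g) := by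
  have h := g.lift_rank_comap_le (ker f)
  simp only [← finrank_eq_rank, Cardinal.lift_natCast] at h
  rw [ker_comp]
  exact_mod_cast h

theorem AlgHom.isPeriodicPt_iff {R A : Type*} [CommSemiring R] [Semiring A] [Algebra R A]
    (σ : A →ₐ[R] A) {n : ℕ} {x : A} : Function.IsPeriodicPt σ n x ↔ (σ ^ n) x = x := by
  rw [Function.IsPeriodicPt, Function.IsFixedPt, AlgHom.coe_pow]

theorem Function.isPeriodicPt_mul_iff_of_coprime {α : Type*} {f : α → α} {x : α} {s n m : ℕ}
    (hm : Function.IsPeriodicPt f m x) (hs : s.Coprime m) (hn : n ∣ m) :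
    Function.IsPeriodicPt f (s * n) x ↔ Function.IsPeriodicPt f n x := by
  refine ⟨fun h ↦ ?_, fun h ↦ h.const_mul s⟩
  obtain ⟨r, rfl⟩ := hn
  have hgcd : (s * n).gcd (n * r) = n := by
    rw [mul_comm s, Nat.gcd_mul_left, (hs.coprime_dvd_right (dvd_mul_left r n)), mul_one]
  simpa [hgcd] using h.gcd hm

theorem pow_add_self_add_one_dvd {A : Type*} [CommRing A] (p : ℕ) [ExpChar A p] (w : ℕ) (y : A) :
    y ^ (p ^ w + 1) + y + 1 ∣ y ^ ((p ^ w + 1) * p ^ w + 1) - 1 := by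
  have hfrob : (y ^ (p ^ w + 1) + y + 1) ^ p ^ w = (y ^ (p ^ w + 1)) ^ p ^ w + y ^ p ^ w + 1 := by
    rw [add_pow_expChar_pow, add_pow_expChar_pow, one_pow]
  obtain ⟨r, hr⟩ : ∃ r, p ^ w = r + 1 :=
    ⟨p ^ w - 1, (Nat.sub_add_cancel (pow_pos (expChar_pos A p) w)).symm⟩
  -- with `f = y^t + y + 1`:
  -- `y^n = y (f - y - 1)^{p^w} = y (f^{p^w} - y^{p^w} - 1) = y f^{p^w} - f + 1`
  refine ⟨y * (y ^ (p ^ w + 1) + y + 1) ^ r - 1, ?_⟩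
  rw [hr] at hfrob ⊢
  linear_combination (-y) * hfrob

section Linearized

variable {k K : Type*} [Field k] [Field K] [Algebra k K] (σ : K →ₐ[k] K)

theorem AlgHom.toEnd_sub_one_apply (x : K) : (AlgHom.toEnd σ - 1) x = σ x - x := rfl

def linearizedMap (a : ℕ → K) (d : ℕ) : K →ₗ[k] K :=
  ∑ i ∈ range (d + 1), a i • (σ ^ i).toLinearMap

theorem linearizedMap_apply (a : ℕ → K) (d : ℕ) (x : K) :
    linearizedMap σ a d x = ∑ i ∈ range (d + 1), a i * (σ ^ i) x := by
  simp only [linearizedMap, LinearMap.sum_apply, LinearMap.smul_apply, smul_eq_mul,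
    AlgHom.toLinearMap_apply]

/-- Right division by `σ - 1`: as `∑ aᵢ σⁱ(u) = 0`, `∑ aᵢ σⁱ(u y) = ∑ aᵢ σⁱ(u) (σⁱ y - y)`, and
`σⁱ - 1 = (∑_{l < i} σˡ) (σ - 1)`. -/
theorem linearizedMap_comp_mulLeft {a : ℕ → K} {d : ℕ} {u : K}
    (hu : linearizedMap σ a (d + 1) u = 0) :
    linearizedMap σ a (d + 1) ∘ₗ mulLeft k u =
      linearizedMap σ (fun l ↦ ∑ i ∈ Ioc l (d + 1), a i * (σ ^ i) u) d ∘ₗ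
        (AlgHom.toEnd σ - 1) := by
  ext y
  set c : ℕ → K := fun i ↦ a i * (σ ^ i) u
  rw [linearizedMap_apply] at hu
  symm
  calc linearizedMap σ (fun l ↦ ∑ i ∈ Ioc l (d + 1), c i) d ((AlgHom.toEnd σ - 1) y)
      = ∑ l ∈ range (d + 1), ∑ i ∈ Ioc l (d + 1), c i * ((σ ^ (l + 1)) y - (σ ^ l) y) := by
        simp only [linearizedMap_apply, AlgHom.toEnd_sub_one_apply, map_sub, Finset.sum_mul,
          pow_succ, AlgHom.mul_apply, mul_sub, Finset.sum_sub_distrib]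
    _ = ∑ i ∈ range (d + 2), ∑ l ∈ range i, c i * ((σ ^ (l + 1)) y - (σ ^ l) y) :=
        Finset.sum_comm' fun l i ↦ by simp only [Finset.mem_range, mem_Ioc]; omega
    _ = ∑ i ∈ range (d + 2), c i * (σ ^ i) y - (∑ i ∈ range (d + 2), c i) * y := by
        rw [Finset.sum_congr rfl fun i _ ↦ by
          rw [← Finset.mul_sum, Finset.sum_range_sub (fun l ↦ (σ ^ l) y), pow_zero,
            AlgHom.one_apply]]
        simp only [mul_sub, Finset.sum_sub_distrib, Finset.sum_mul]
    _ = linearizedMap σ a (d + 1) (u * y) := by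
        simp only [hu, c, zero_mul, sub_zero, linearizedMap_apply, map_mul, mul_assoc]

theorem finrank_ker_toEnd_sub_one_le [FiniteDimensional k K]
    (hfix : ∀ x, σ x = x → x ∈ Set.range (algebraMap k K)) :
    finrank k (ker (AlgHom.toEnd σ - 1)) ≤ 1 := by
  calc finrank k (ker (AlgHom.toEnd σ - 1))
      ≤ finrank k (range (Algebra.linearMap k K)) := Submodule.finrank_mono fun x hx ↦
        hfix x (sub_eq_zero.1 (mem_ker.1 hx))
    _ ≤ 1 := (finrank_range_le _).trans_eq (finrank_self k)

theorem finrank_ker_linearizedMap_le [FiniteDimensional k K]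
    (hfix : ∀ x, σ x = x → x ∈ Set.range (algebraMap k K)) (d : ℕ) (a : ℕ → K) (ha : a d ≠ 0) :
    finrank k (ker (linearizedMap σ a d)) ≤ d := by
  induction d generalizing a with
  | zero =>
    have : ker (linearizedMap σ a 0) = ⊥ := ker_eq_bot'.2 fun x hx ↦ by
      simpa [linearizedMap_apply, ha] using hx
    rw [this, finrank_bot]
  | succ d ih =>
    by_cases hbot : ker (linearizedMap σ a (d + 1)) = ⊥
    · rw [hbot, finrank_bot]; exact Nat.zero_le _
    obtain ⟨u, hu, hu0⟩ := Submodule.ne_bot_iff _ |>.1 hbot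
    have hb : ∑ i ∈ Ioc d (d + 1), a i * (σ ^ i) u ≠ 0 := by
      rw [Nat.Ioc_succ_singleton, sum_singleton]
      exact mul_ne_zero ha ((map_ne_zero _).2 hu0)
    calc finrank k (ker (linearizedMap σ a (d + 1)))
        ≤ finrank k ((ker (linearizedMap σ a (d + 1) ∘ₗ mulLeft k u)).map (mulLeft k u)) :=
          Submodule.finrank_mono fun x hx ↦ ⟨u⁻¹ * x, by simpa [mul_inv_cancel_left₀ hu0] using hx,
            mul_inv_cancel_left₀ hu0 x⟩
      _ ≤ finrank k (ker (linearizedMap σ a (d + 1) ∘ₗ mulLeft k u)) := Submodule.finrank_map_le _ _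
      _ ≤ d + 1 := by
        rw [linearizedMap_comp_mulLeft σ hu]
        exact (finrank_ker_comp_le _ _).trans
          (add_le_add (ih _ hb) (finrank_ker_toEnd_sub_one_le σ hfix))

theorem aeval_toEnd_eq_linearizedMap (g : k[X]) :
    aeval (AlgHom.toEnd σ) g =
      linearizedMap σ (fun i ↦ algebraMap k K (g.coeff i)) g.natDegree := by
  simp only [aeval_eq_sum_range, linearizedMap, algebraMap_smul, ← map_pow]
  rfl

theorem finrank_ker_aeval_le [FiniteDimensional k K]
    (hfix : ∀ x, σ x = x → x ∈ Set.range (algebraMap k K)) {g : k[X]} (hg : g ≠ 0) :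
    finrank k (ker (aeval (AlgHom.toEnd σ) g)) ≤ g.natDegree := by
  rw [aeval_toEnd_eq_linearizedMap]
  exact finrank_ker_linearizedMap_le σ hfix _ _ (by simpa using hg)

theorem natDegree_le_finrank_ker_aeval_of_dvd [FiniteDimensional k K]
    (hfix : ∀ x, σ x = x → x ∈ Set.range (algebraMap k K)) {f g : k[X]} (hfg : f ∣ g)
    (hg : g ≠ 0) (hgdim : g.natDegree ≤ finrank k (ker (aeval (AlgHom.toEnd σ) g))) :
    f.natDegree ≤ finrank k (ker (aeval (AlgHom.toEnd σ) f)) := by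
  obtain ⟨h, rfl⟩ := hfg
  have hf : f ≠ 0 := left_ne_zero_of_mul hg
  have hh : h ≠ 0 := right_ne_zero_of_mul hg
  have hcomp := finrank_ker_comp_le (aeval (AlgHom.toEnd σ) f) (aeval (AlgHom.toEnd σ) h)
  rw [← Module.End.mul_eq_comp, ← map_mul] at hcomp
  have hker := finrank_ker_aeval_le σ hfix hh
  rw [Polynomial.natDegree_mul hf hh] at hgdim
  omega

end Linearized

theorem rkw_comp_add_finrank_le {k K : Type} [Field k] [Field K] [Algebra k K] {n : ℕ}
    {α : Fin n → K} (hα : LinearIndependent k α) (ℓ : K →ₗ[k] K) {W : Submodule k K}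
    (hWα : W ≤ Submodule.span k (Set.range α)) (hWℓ : W ≤ ker ℓ) :
    rkw k (ℓ ∘ α) + finrank k W ≤ n := by
  set V := Submodule.span k (Set.range α)
  have : FiniteDimensional k V := FiniteDimensional.span_of_finite k (Set.finite_range α)
  have hV : finrank k V = n := by rw [finrank_span_eq_card hα, Fintype.card_fin]
  have hrange : rkw k (ℓ ∘ α) = finrank k (range (ℓ.domRestrict V)) := by
    rw [rkw, Set.range_comp, Submodule.span_image, range_domRestrict]
  have hker : finrank k W ≤ finrank k (ker (ℓ.domRestrict V)) := by
    rw [← (Submodule.comapSubtypeEquivOfLe hWα).finrank_eq]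
    exact Submodule.finrank_mono fun x hx ↦ hWℓ hx
  rw [hrange, ← hV, ← (ℓ.domRestrict V).finrank_range_add_finrank_ker]
  exact Nat.add_le_add_left hker _

section Codewords

variable {k K : Type*} [Field k] [Field K] [Algebra k K] (σ : K →ₐ[k] K)

/-- For `σ x = x^{q^s}` on `F_{q^m}` with `gcd(s, m) = 1` and `n ∣ m`, this is `F_{q^n}`. -/
noncomputable def periodicSubmodule (n : ℕ) : Submodule k K :=
  ker (aeval (AlgHom.toEnd σ) (X ^ n - 1 : k[X]))

theorem mem_periodicSubmodule {n : ℕ} {x : K} : x ∈ periodicSubmodule σ n ↔ (σ ^ n) x = x := by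
  rw [periodicSubmodule, mem_ker, map_sub, map_pow, aeval_X, map_one, ← map_pow,
    LinearMap.sub_apply, Module.End.one_apply, AlgHom.toEnd_apply, AlgHom.toLinearMap_apply,
    sub_eq_zero]

theorem mul_mem_periodicSubmodule {n : ℕ} {x y : K} (hx : x ∈ periodicSubmodule σ n)
    (hy : y ∈ periodicSubmodule σ n) : x * y ∈ periodicSubmodule σ n := by
  rw [mem_periodicSubmodule] at *
  rw [map_mul, hx, hy]

theorem div_mem_periodicSubmodule {n : ℕ} {x y : K} (hx : x ∈ periodicSubmodule σ n)
    (hy : y ∈ periodicSubmodule σ n) : x / y ∈ periodicSubmodule σ n := by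
  rw [mem_periodicSubmodule] at *
  rw [map_div₀, hx, hy]

theorem aeval_trinomial_apply (t : ℕ) (x : K) :
    aeval (AlgHom.toEnd σ) (X ^ t + X + 1 : k[X]) x = (σ ^ t) x + σ x + x := by
  rw [map_add, map_add, map_pow, aeval_X, map_one, ← map_pow, LinearMap.add_apply,
    LinearMap.add_apply, Module.End.one_apply, AlgHom.toEnd_apply, AlgHom.toEnd_apply,
    AlgHom.toLinearMap_apply, AlgHom.toLinearMap_apply]

variable (t j : ℕ)

/-- The coefficients make `x^{σ^{t+j}}` agree with this map on `u · ker (σ^t + σ + 1)`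
(`sub_codewordMap_apply_mul`). -/
def codewordMap (u : K) : K →ₗ[k] K :=
  (-((σ ^ (t + j)) u / (σ ^ j) u)) • (σ ^ j).toLinearMap +
    (-((σ ^ (t + j)) u / (σ ^ (j + 1)) u)) • (σ ^ (j + 1)).toLinearMap

theorem codewordMap_apply (u x : K) :
    codewordMap σ t j u x = -((σ ^ (t + j)) u / (σ ^ j) u) * (σ ^ j) x +
      -((σ ^ (t + j)) u / (σ ^ (j + 1)) u) * (σ ^ (j + 1)) x :=
  rfl

theorem sub_codewordMap_apply_mul {u : K} (hu : u ≠ 0) (x : K) :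
    (σ ^ (t + j)) (u * x) - codewordMap σ t j u (u * x) =
      (σ ^ (t + j)) u * (σ ^ j) ((σ ^ t) x + σ x + x) := by
  have e₁ : (σ ^ j) ((σ ^ t) x) = (σ ^ (t + j)) x := by
    rw [← AlgHom.mul_apply, ← pow_add, add_comm]
  have e₂ : (σ ^ j) (σ x) = (σ ^ (j + 1)) x := by rw [← AlgHom.mul_apply, ← pow_succ]
  have h₁ : (σ ^ j) u ≠ 0 := (map_ne_zero _).2 hu
  have h₂ : (σ ^ (j + 1)) u ≠ 0 := (map_ne_zero _).2 hu
  rw [codewordMap_apply, map_add, map_add, e₁, e₂]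
  simp only [map_mul]
  field_simp
  ring

theorem eq_zero_of_binomial_eq_zero {a b z y : K} (hz : z ≠ 0) (hy : σ y ≠ y)
    (h₁ : a * (σ ^ j) z + b * (σ ^ (j + 1)) z = 0)
    (h₂ : a * (σ ^ j) (z * y) + b * (σ ^ (j + 1)) (z * y) = 0) : a = 0 := by
  have hσy : (σ ^ (j + 1)) y - (σ ^ j) y ≠ 0 := by
    rw [pow_succ, AlgHom.mul_apply, ← map_sub]
    exact (map_ne_zero _).2 (sub_ne_zero.2 hy)
  have hb : b * (σ ^ (j + 1)) z = 0 := by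
    refine (mul_eq_zero.1 ?_).resolve_right hσy
    simp only [map_mul] at h₂
    linear_combination h₂ - (σ ^ j) y * h₁
  rw [hb, add_zero] at h₁
  exact (mul_eq_zero.1 h₁).resolve_right ((map_ne_zero _).2 hz)

theorem pow_apply_div_eq_of_codewordMap_eq {u₁ u₂ y : K} (hu₁ : u₁ ≠ 0) (hu₂ : u₂ ≠ 0)
    (hy : σ y ≠ y) (h₁ : codewordMap σ t j u₁ u₁ = codewordMap σ t j u₂ u₁)
    (h₂ : codewordMap σ t j u₁ (u₁ * y) = codewordMap σ t j u₂ (u₁ * y)) :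
    (σ ^ t) (u₂ / u₁) = u₂ / u₁ := by
  have hA := eq_zero_of_binomial_eq_zero σ j hu₁ hy
    (a := -((σ ^ (t + j)) u₁ / (σ ^ j) u₁) - -((σ ^ (t + j)) u₂ / (σ ^ j) u₂))
    (b := -((σ ^ (t + j)) u₁ / (σ ^ (j + 1)) u₁) - -((σ ^ (t + j)) u₂ / (σ ^ (j + 1)) u₂))
    (by rw [codewordMap_apply, codewordMap_apply] at h₁; linear_combination h₁)
    (by rw [codewordMap_apply, codewordMap_apply] at h₂; linear_combination h₂)
  have h₁ : (σ ^ j) u₁ ≠ 0 := (map_ne_zero _).2 hu₁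
  have h₂ : (σ ^ j) u₂ ≠ 0 := (map_ne_zero _).2 hu₂
  refine (σ ^ j).injective ?_
  change (σ ^ j) ((σ ^ t) (u₂ / u₁)) = (σ ^ j) (u₂ / u₁)
  rw [← AlgHom.mul_apply, ← pow_add, add_comm, map_div₀, map_div₀,
    div_eq_div_iff ((map_ne_zero _).2 hu₁) h₁]
  field_simp at hA
  linear_combination hA

end Codewords

section DeepHole

variable {k K : Type} [Field k] [Field K] [Algebra k K] (σ : K →ₐ[k] K)

theorem finrank_periodicSubmodule {n : ℕ} {α : Fin n → K} (hα : LinearIndependent k α) {β : K}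
    (hβ : β ≠ 0)
    (hV : Submodule.span k (Set.range α) = (periodicSubmodule σ n).map (mulLeft k β)) :
    finrank k (periodicSubmodule σ n) = n := by
  rw [(Submodule.equivMapOfInjective (mulLeft k β) (mul_right_injective₀ hβ) _).finrank_eq, ← hV,
    finrank_span_eq_card hα, Fintype.card_fin]

theorem rkw_sub_codewordMap_le {n t : ℕ} (j : ℕ) {α : Fin n → K} (hα : LinearIndependent k α)
    {β : K} (hV : Submodule.span k (Set.range α) = (periodicSubmodule σ n).map (mulLeft k β))
    (hS : t ≤ finrank k (ker (aeval (AlgHom.toEnd σ) (X ^ t + X + 1 : k[X]))))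
    (hSF : ker (aeval (AlgHom.toEnd σ) (X ^ t + X + 1 : k[X])) ≤ periodicSubmodule σ n)
    {u : K} (hu : u ∈ Submodule.span k (Set.range α)) (hu0 : u ≠ 0) :
    rkw k ((fun i ↦ (σ ^ (t + j)) (α i)) - codewordMap σ t j u ∘ α) ≤ n - t := by
  set S := ker (aeval (AlgHom.toEnd σ) (X ^ t + X + 1 : k[X]))
  rw [hV] at hu
  obtain ⟨z, hz, rfl⟩ := hu
  rw [mulLeft_apply] at hu0 ⊢
  have hW := rkw_comp_add_finrank_le hα ((σ ^ (t + j)).toLinearMap - codewordMap σ t j (β * z))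
    (W := S.map (mulLeft k (β * z))) ?_ ?_
  · rw [← (Submodule.equivMapOfInjective _ (mul_right_injective₀ hu0) S).finrank_eq] at hW
    change rkw k (⇑((σ ^ (t + j)).toLinearMap - codewordMap σ t j (β * z)) ∘ α) ≤ n - t
    omega
  · rintro _ ⟨x, hx, rfl⟩
    rw [hV]
    exact ⟨z * x, mul_mem_periodicSubmodule σ hz (hSF hx), by simp only [mulLeft_apply, mul_assoc]⟩
  · rintro _ ⟨x, hx, rfl⟩
    rw [mem_ker, LinearMap.sub_apply, AlgHom.toLinearMap_apply, mulLeft_apply,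
      sub_codewordMap_apply_mul σ t j hu0, ← aeval_trinomial_apply, mem_ker.1 hx, map_zero,
      mul_zero]

theorem exists_algebraMap_mul_eq_of_codewordMap_comp_eq [FiniteDimensional k K]
    (hfix : ∀ x, σ x = x → x ∈ Set.range (algebraMap k K)) {n t : ℕ} (j : ℕ)
    (htn : t.Coprime n) (hn : 2 ≤ n) {α : Fin n → K} (hα : LinearIndependent k α) {β : K}
    (hβ : β ≠ 0)
    (hV : Submodule.span k (Set.range α) = (periodicSubmodule σ n).map (mulLeft k β))
    {u₁ u₂ : K} (hu₁ : u₁ ∈ Submodule.span k (Set.range α)) (hu₁0 : u₁ ≠ 0)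
    (hu₂ : u₂ ∈ Submodule.span k (Set.range α)) (hu₂0 : u₂ ≠ 0)
    (h : codewordMap σ t j u₁ ∘ α = codewordMap σ t j u₂ ∘ α) :
    ∃ a : k, a ≠ 0 ∧ algebraMap k K a * u₁ = u₂ := by
  have heq : Set.EqOn (codewordMap σ t j u₁) (codewordMap σ t j u₂)
      (Submodule.span k (Set.range α)) :=
    LinearMap.eqOn_span' (by rintro _ ⟨i, rfl⟩; exact congrFun h i)
  obtain ⟨y, hyF, hy⟩ : ∃ y ∈ periodicSubmodule σ n, σ y ≠ y := by
    by_contra! hall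
    have hle := Submodule.finrank_mono (show periodicSubmodule σ n ≤ ker (AlgHom.toEnd σ - 1)
      from fun y hy ↦ sub_eq_zero.2 (hall y hy))
    have := finrank_ker_toEnd_sub_one_le σ hfix
    rw [finrank_periodicSubmodule σ hα hβ hV] at hle
    omega
  obtain ⟨z₁, hz₁, rfl⟩ : ∃ z ∈ periodicSubmodule σ n, β * z = u₁ := by rwa [hV] at hu₁
  obtain ⟨z₂, hz₂, rfl⟩ : ∃ z ∈ periodicSubmodule σ n, β * z = u₂ := by rwa [hV] at hu₂
  have hyV : β * z₁ * y ∈ Submodule.span k (Set.range α) := by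
    rw [hV]
    exact ⟨z₁ * y, mul_mem_periodicSubmodule σ hz₁ hyF, by rw [mulLeft_apply, mul_assoc]⟩
  have hρt := pow_apply_div_eq_of_codewordMap_eq σ t j hu₁0 hu₂0 hy (heq hu₁) (heq hyV)
  have hρn : (σ ^ n) (β * z₂ / (β * z₁)) = β * z₂ / (β * z₁) := by
    rw [mul_div_mul_left _ _ hβ, ← mem_periodicSubmodule]
    exact div_mem_periodicSubmodule σ hz₂ hz₁
  rw [← AlgHom.isPeriodicPt_iff] at hρt hρn
  obtain ⟨a, ha⟩ := hfix _ (by have h1 := hρt.gcd hρn; rwa [htn.gcd_eq_one] at h1)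
  refine ⟨a, fun ha0 ↦ div_ne_zero hu₂0 hu₁0 (by rw [← ha, ha0, map_zero]), ?_⟩
  rw [ha, div_mul_cancel₀ _ hu₁0]

theorem le_ncard_codewords [Fintype k] [Fintype K]
    (hfix : ∀ x, σ x = x → x ∈ Set.range (algebraMap k K)) {n t : ℕ} (j : ℕ)
    (htn : t.Coprime n) (hn : 2 ≤ n) {α : Fin n → K} (hα : LinearIndependent k α) {β : K}
    (hβ : β ≠ 0)
    (hV : Submodule.span k (Set.range α) = (periodicSubmodule σ n).map (mulLeft k β)) :
    (Fintype.card k ^ n - 1) / (Fintype.card k - 1) ≤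
      ((fun u ↦ codewordMap σ t j u ∘ α) ''
        ((Submodule.span k (Set.range α) : Set K) \ {0})).ncard := by
  classical
  set V := Submodule.span k (Set.range α)
  set cw : K → Fin n → K := fun u ↦ codewordMap σ t j u ∘ α
  set Γ : Finset K := (V : Set K).toFinset.erase 0
  have hmem : ∀ {u}, u ∈ Γ ↔ u ∈ V ∧ u ≠ 0 := by simp [Γ, and_comm]
  have hΓ : Γ.card = Fintype.card k ^ n - 1 := by
    rw [Finset.card_erase_of_mem (by simp), Set.toFinset_card, ← Nat.card_eq_fintype_card,
      SetLike.coe_sort_coe, Nat.card_eq_fintype_card, Module.card_eq_pow_finrank (K := k),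
      finrank_span_eq_card hα, Fintype.card_fin]
  have hfib : ∀ c ∈ Γ.image cw, (Γ.filter (cw · = c)).card ≤ Fintype.card k - 1 := by
    intro c hc
    obtain ⟨u₁, hu₁, rfl⟩ := Finset.mem_image.1 hc
    calc (Γ.filter (cw · = cw u₁)).card
        ≤ ((univ.erase (0 : k)).image fun a ↦ algebraMap k K a * u₁).card := by
          refine card_le_card fun u hu ↦ ?_
          obtain ⟨hu, hcw⟩ := Finset.mem_filter.1 hu
          obtain ⟨a, ha0, rfl⟩ := exists_algebraMap_mul_eq_of_codewordMap_comp_eq σ hfix j htn hn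
            hα hβ hV (hmem.1 hu₁).1 (hmem.1 hu₁).2 (hmem.1 hu).1 (hmem.1 hu).2 hcw.symm
          exact Finset.mem_image.2 ⟨a, Finset.mem_erase.2 ⟨ha0, mem_univ a⟩, rfl⟩
      _ ≤ (univ.erase (0 : k)).card := card_image_le
      _ = Fintype.card k - 1 := by rw [card_erase_of_mem (mem_univ _), card_univ]
  have himage : cw '' ((V : Set K) \ {0}) = ↑(Γ.image cw) := by
    ext c
    simp [hmem]
  rw [himage, Set.ncard_coe_finset]
  exact Nat.div_le_of_le_mul (hΓ ▸ card_le_mul_card_image Γ _ hfib)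

theorem le_card_inter_ball [Fintype k] [Fintype K]
    (hfix : ∀ x, σ x = x → x ∈ Set.range (algebraMap k K)) {n t : ℕ} (j : ℕ) (ht : 2 ≤ t)
    (htn : t.Coprime n) (hdvd : (X ^ t + X + 1 : k[X]) ∣ X ^ n - 1) {α : Fin n → K}
    (hα : LinearIndependent k α) {β : K} (hβ : β ≠ 0)
    (hV : Submodule.span k (Set.range α) = (periodicSubmodule σ n).map (mulLeft k β))
    {C : Set (Fin n → K)} (hC : ∀ u, codewordMap σ t j u ∘ α ∈ C) :
    (Fintype.card k ^ n - 1) / (Fintype.card k - 1) ≤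
      Nat.card ↥(C ∩ ball k (fun i ↦ (σ ^ (t + j)) (α i)) (n - t)) := by
  have hn0 : n ≠ 0 := by rintro rfl; exact absurd (Nat.coprime_zero_right t |>.1 htn) (by omega)
  have htri : (X ^ t + X + 1 : k[X]).natDegree = t := by
    compute_degree!
    · rw [if_neg (by omega), if_neg (by omega)]; simp
    · omega
  have hXn : (X ^ n - 1 : k[X]) ≠ 0 := by
    simpa using Polynomial.X_pow_sub_C_ne_zero (Nat.pos_of_ne_zero hn0) (1 : k)
  have hXdeg : (X ^ n - 1 : k[X]).natDegree = n := by
    simpa using Polynomial.natDegree_X_pow_sub_C (n := n) (r := (1 : k))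
  have hS := natDegree_le_finrank_ker_aeval_of_dvd σ hfix hdvd hXn (by
    rw [← periodicSubmodule, finrank_periodicSubmodule σ hα hβ hV, hXdeg])
  rw [htri] at hS
  have htle : t ≤ n := htri ▸ hXdeg ▸ Polynomial.natDegree_le_of_dvd hdvd hXn
  have hSF : ker (aeval (AlgHom.toEnd σ) (X ^ t + X + 1 : k[X])) ≤ periodicSubmodule σ n := by
    obtain ⟨h, hh⟩ := hdvd
    rw [periodicSubmodule, hh, mul_comm, map_mul, Module.End.mul_eq_comp]
    exact ker_le_ker_comp _ _
  calc (Fintype.card k ^ n - 1) / (Fintype.card k - 1)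
      ≤ ((fun u ↦ codewordMap σ t j u ∘ α) ''
          ((Submodule.span k (Set.range α) : Set K) \ {0})).ncard :=
        le_ncard_codewords σ hfix j htn (by omega) hα hβ hV
    _ ≤ Nat.card ↥(C ∩ ball k (fun i ↦ (σ ^ (t + j)) (α i)) (n - t)) := by
        refine Set.ncard_le_ncard ?_ (Set.toFinite _)
        rintro _ ⟨u, ⟨hu, hu0⟩, rfl⟩
        exact ⟨hC u, rkw_sub_codewordMap_le σ j hα hV hS hSF hu hu0⟩

end DeepHole

theorem notMem_of_one_lt_card_inter_ball {k K : Type} [Field k] [Field K] [Algebra k K] {n r : ℕ}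
    {C : Set (Fin n → K)} {w : Fin n → K} (hr : r < minDist k C)
    (hC : 1 < Nat.card ↥(C ∩ ball k w r)) : w ∉ C := by
  intro hw
  obtain ⟨c, ⟨hcC, hc⟩, hcw⟩ := Set.exists_ne_of_one_lt_ncard hC w
  have hd : minDist k C ≤ rkw k (w - c) := Nat.sInf_le ⟨w, hw, c, hcC, hcw.symm, rfl⟩
  have hc : rkw k (w - c) ≤ r := hc
  omega

theorem one_lt_pow_sub_one_div {q n : ℕ} (hq : 2 ≤ q) (hn : 2 ≤ n) :
    1 < (q ^ n - 1) / (q - 1) := by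
  rw [Nat.lt_div_iff_mul_lt (by omega)]
  have h₁ : q ^ 2 ≤ q ^ n := Nat.pow_le_pow_right (by omega) hn
  have h₂ : 2 * q ≤ q ^ 2 := by rw [pow_two]; exact Nat.mul_le_mul_right q hq
  omega

section Frobenius

open FiniteField

variable {k K : Type*} [Field k] [Fintype k] [Field K] [Algebra k K]

theorem frobeniusAlgHom_pow_apply (i : ℕ) (x : K) :
    (frobeniusAlgHom k K ^ i) x = x ^ Fintype.card k ^ i := by
  rw [AlgHom.coe_pow, coe_frobeniusAlgHom, pow_iterate]

variable [Finite K]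

theorem isPeriodicPt_frobeniusAlgHom (x : K) :
    Function.IsPeriodicPt (frobeniusAlgHom k K) (finrank k K) x := by
  rw [AlgHom.isPeriodicPt_iff, ← orderOf_frobeniusAlgHom, pow_orderOf_eq_one, AlgHom.one_apply]

theorem mem_range_algebraMap_of_pow_card_eq_self {x : K} (hx : x ^ Fintype.card k = x) :
    x ∈ Set.range (algebraMap k K) := by
  refine (IsGalois.mem_range_algebraMap_iff_fixed x).2 fun φ ↦ ?_
  obtain ⟨i, rfl⟩ := (bijective_frobeniusAlgEquivOfAlgebraic_pow k K).2 φ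
  rw [AlgEquiv.coe_pow, coe_frobeniusAlgEquivOfAlgebraic]
  exact Function.iterate_fixed hx i

theorem frobeniusAlgHom_pow_pow_apply_eq_self_iff {s r : ℕ} (hs : s.Coprime (finrank k K))
    (hr : r ∣ finrank k K) (x : K) :
    ((frobeniusAlgHom k K ^ s) ^ r) x = x ↔ x ^ Fintype.card k ^ r = x := by
  rw [← pow_mul, ← AlgHom.isPeriodicPt_iff, Function.isPeriodicPt_mul_iff_of_coprime
    (isPeriodicPt_frobeniusAlgHom x) hs hr, AlgHom.isPeriodicPt_iff, frobeniusAlgHom_pow_apply]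

theorem mem_range_algebraMap_of_frobeniusAlgHom_pow_apply_eq {s : ℕ}
    (hs : s.Coprime (finrank k K)) {x : K} (hx : (frobeniusAlgHom k K ^ s) x = x) :
    x ∈ Set.range (algebraMap k K) :=
  mem_range_algebraMap_of_pow_card_eq_self <| by
    simpa using (frobeniusAlgHom_pow_pow_apply_eq_self_iff hs (one_dvd _) x).1 (by simpa using hx)

end Frobenius

theorem stmt_14_general (p q s n m t j : ℕ) (Fq K : Type) [Field Fq] [Fintype Fq] [Field K]
    [Fintype K] [Algebra Fq K]
    (hp : p.Prime) (hpe : ∃ e : ℕ, 0 < e ∧ q = p ^ e)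
    (hcard : Fintype.card Fq = q) (hfin : Module.finrank Fq K = m)
    (hnm : n ∣ m) (hs : Nat.gcd s m = 1)
    (𝒞 : Set (K → K))
    (β : K) (hβ : β ≠ 0)
    (α : Fin n → K) (hα : LinearIndependent Fq α)
    (hspan : (Submodule.span Fq (Set.range α) : Set K)
      = (fun y : K => β * y) '' {x : K | x ^ q ^ n = x})
    (C : Set (Fin n → K)) (hC : C = (fun g : K → K => fun i : Fin n => g (α i)) '' 𝒞)
    (d : ℕ) (hd : d = minDist Fq C)
    (ht1 : (n : ℤ) - d + 1 ≤ (t : ℤ))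
    (htp : ∃ w : ℕ, t - 1 = p ^ w)
    (hnt : n = t * (t - 1) + 1)
    (hGab : {f : K → K | ∃ a b : K, ∀ x : K,
        f x = a * x ^ ((q ^ s) ^ j) + b * x ^ ((q ^ s) ^ (j + 1))} ⊆ 𝒞) :
    ∃ w : Fin n → K, w ∉ C ∧
      (q ^ n - 1) / (q - 1) ≤ Nat.card ↥(C ∩ ball Fq w (n - t)) := by
  obtain ⟨e, -, hqe⟩ := hpe
  obtain ⟨w, hw⟩ := htp
  have : Fact p.Prime := ⟨hp⟩
  have : CharP Fq p := charP_of_card_eq_prime_pow (hcard.trans hqe)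
  subst hcard hfin hd
  have ht : 2 ≤ t := by have := Nat.one_le_pow w p hp.pos; omega
  have hmul : t - 1 ≤ t * (t - 1) := Nat.le_mul_of_pos_left _ (by omega)
  set σ := FiniteField.frobeniusAlgHom Fq K ^ s
  have hσ (i : ℕ) (x : K) : (σ ^ i) x = x ^ (Fintype.card Fq ^ s) ^ i := by
    rw [← pow_mul, frobeniusAlgHom_pow_apply, pow_mul]
  have hV : Submodule.span Fq (Set.range α) = (periodicSubmodule σ n).map (mulLeft Fq β) := by
    refine SetLike.coe_injective (hspan.trans ?_)
    rw [Submodule.map_coe]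
    congr 1
    ext x
    exact (frobeniusAlgHom_pow_pow_apply_eq_self_iff hs hnm x).symm.trans
      (mem_periodicSubmodule σ).symm
  have htn : t.Coprime n :=
    hnt ▸ (Nat.coprime_mul_left_add_right t 1 (t - 1)).2 (Nat.coprime_one_right t)
  have hdvd : (X ^ t + X + 1 : Fq[X]) ∣ X ^ n - 1 := by
    obtain rfl : t = p ^ w + 1 := by omega
    rw [hnt, Nat.add_sub_cancel]
    exact pow_add_self_add_one_dvd p w X
  have hcount := le_card_inter_ball σ
    (fun _ ↦ mem_range_algebraMap_of_frobeniusAlgHom_pow_apply_eq hs) j ht htn hdvd hα hβ hV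
    (C := C) fun u ↦
      hC ▸ ⟨_, hGab ⟨_, _, fun x ↦ by rw [codewordMap_apply, hσ j x, hσ (j + 1) x]⟩, rfl⟩
  exact ⟨_, notMem_of_one_lt_card_inter_ball (by omega)
    ((one_lt_pow_sub_one_div Fintype.one_lt_card (by omega)).trans_le hcount), hcount⟩

/-- with `n = t(t−1)+1`, `t−1` a power of the characteristic `p`, and
`{a x^{σ^j} + b x^{σ^{j+1}} : a,b} ⊆ 𝒞` for some `j < n−t`, where
`n−d+1 ≤ t ≤ n−⌊(d−1)/2⌋−1`, there is a word `w ∉ C` with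
`|C ∩ B_{n−t}(w)| ≥ (q^n−1)/(q−1)`. -/
theorem stmt_14 (p q s n m t j : ℕ) (Fq K : Type) [Field Fq] [Fintype Fq] [Field K]
    [Fintype K] [Algebra Fq K]
    (hp : p.Prime) (hpe : ∃ e : ℕ, 0 < e ∧ q = p ^ e)
    (hcard : Fintype.card Fq = q) (hfin : Module.finrank Fq K = m)
    (hn : 0 < n) (hnm : n ∣ m) (hs : Nat.gcd s m = 1)
    (𝒞 : Set (K → K))
    (hlin : ∀ f ∈ 𝒞, ∃ N : ℕ, ∃ a : Fin N → K, ∀ x : K,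
      f x = ∑ i : Fin N, a i * x ^ ((q ^ s) ^ (i : ℕ)))
    (β : K) (hβ : β ≠ 0)
    (α : Fin n → K) (hα : LinearIndependent Fq α)
    (hspan : (Submodule.span Fq (Set.range α) : Set K)
      = (fun y : K => β * y) '' {x : K | x ^ q ^ n = x})
    (C : Set (Fin n → K)) (hC : C = (fun g : K → K => fun i : Fin n => g (α i)) '' 𝒞)
    (d : ℕ) (hd : d = minDist Fq C)
    (ht0 : 0 < t)
    (ht1 : (n : ℤ) - d + 1 ≤ (t : ℤ))
    (ht2 : (t : ℤ) ≤ (n : ℤ) - (((d - 1) / 2 : ℕ) : ℤ) - 1)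
    (htp : ∃ w : ℕ, t - 1 = p ^ w)
    (hnt : n = t * (t - 1) + 1)
    (hj : (j : ℤ) < (n : ℤ) - (t : ℤ))
    (hGab : {f : K → K | ∃ a b : K, ∀ x : K,
        f x = a * x ^ ((q ^ s) ^ j) + b * x ^ ((q ^ s) ^ (j + 1))} ⊆ 𝒞) :
    ∃ w : Fin n → K, w ∉ C ∧
      (q ^ n - 1) / (q - 1) ≤ Nat.card ↥(C ∩ ball Fq w (n - t)) :=
  stmt_14_general p q s n m t j Fq K hp hpe hcard hfin hnm hs 𝒞 β hβ α hα hspan C hC d hd ht1 htp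
    hnt hGab
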